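/- arXiv:2209.14428 — 2 statements merged into one kernel-verified Lean document; each statement's English description precedes it below -/
import Mathlib

section
/- The polynomials Q_k defined by ∑_k Q_k(x) t^k = (1/(1-t)) cosh(√x log((1+√t)/(1-√t))) satisfy the three-term recursion (2k+1 + 2x/(2k+1)) Q_k(x) = (k+1) Q_{k+1}(x) + k Q_{k-1}(x) for all k ≥ 0, with Q_{-1} := 0. -/
/-- The power series `S(t) = ∑ 2 t^m/(2m+1)`, so that
`log((1+√t)/(1-√t)) = √t · S(t)`. -/
noncomputable def Sser : PowerSeries (Polynomial ℚ) :=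
  PowerSeries.mk fun m => Polynomial.C (2 / (2 * (m : ℚ) + 1))

/-- The geometric series `1/(1-t)`. -/
noncomputable def geomSer : PowerSeries (Polynomial ℚ) :=
  PowerSeries.mk fun _ => (1 : Polynomial ℚ)

/-- The `n`-th term `x^n (t·S(t)²)^n / (2n)!` in the expansion of
`cosh(√x log((1+√t)/(1-√t)))`. -/
noncomputable def coshTerm (n : ℕ) : PowerSeries (Polynomial ℚ) :=
  PowerSeries.C
      (Polynomial.C ((Nat.factorial (2 * n) : ℚ)⁻¹) * Polynomial.X ^ n) *
    (PowerSeries.X * Sser ^ 2) ^ n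

/-- The polynomial `Q_k`, the coefficient of `t^k` in
`(1/(1-t)) cosh(√x log((1+√t)/(1-√t)))`.  (Terms `coshTerm n` with `n > k`
have `t`-order greater than `k`, so the truncated sum suffices.) -/
noncomputable def Qpoly (k : ℕ) : Polynomial ℚ :=
  PowerSeries.coeff k
    (geomSer * ∑ n ∈ Finset.range (k + 1), coshTerm n)

/-!
Write `L = log((1+√t)/(1-√t)) = √t·S(t)`, so that `L' = 1/(√t(1-t))`, and put
`C = cosh(√x L)` and `G = sinh(√x L)/√(xt)`. Then `(1-t) C' = x G` and `(1-t)(G + 2tG') = 2C`.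
Since `Φ = C/(1-t)` generates the `Q_k`, the second identity says `(2k+1) g_k = 2 Q_k` for the
coefficients `g_k` of `G`, and the first one becomes `(1-t)² Φ' - (1-t) Φ = x G`, whose
`t^k`-coefficient is `(k+1) Q_{k+1} - (2k+1) Q_k + k Q_{k-1} = x g_k`. Eliminating `g_k` gives
the recursion.

Both differential identities are checked term by term on the expansions in powers of
`L² = t S(t)²`, using only `(1-t)(S + 2tS') = 2`. The `n`-th terms are `O(tⁿ)`, so the
identities hold for partial sums, whose coefficients up to `t^k` are those of the full series.
-/
open PowerSeries

section

variable {R : Type*} [CommRing R]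

theorem derivative_C_mul (r : R) (f : R⟦X⟧) : d⁄dX R (C r * f) = C r * d⁄dX R f := by
  simp only [Derivation.leibniz, derivative_C, smul_eq_mul, mul_zero, add_zero]

theorem coeff_X_mul_derivative (f : R⟦X⟧) (k : ℕ) :
    coeff k (X * d⁄dX R f) = k * coeff k f := by
  cases k with
  | zero => simp
  | succ j => rw [coeff_succ_X_mul, coeff_derivative, mul_comm]; push_cast; rfl

theorem coeff_add_two_mul_X_mul_derivative (f : R⟦X⟧) (k : ℕ) :
    coeff k (f + 2 * (X * d⁄dX R f)) = (2 * k + 1) * coeff k f := by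
  rw [map_add, ← map_ofNat C 2, coeff_C_mul, coeff_X_mul_derivative]
  ring

theorem coeff_one_sub_X_sq_mul_derivative_sub (f : R⟦X⟧) (k : ℕ) :
    coeff k ((1 - X) ^ 2 * d⁄dX R f - (1 - X) * f) =
      (k + 1) * coeff (k + 1) f - (2 * k + 1) * coeff k f + k * coeff (k - 1) f := by
  have h : (1 - X) ^ 2 * d⁄dX R f - (1 - X) * f =
      d⁄dX R f - f - X * d⁄dX R f - X * d⁄dX R f + X * (f + X * d⁄dX R f) := by ring
  rw [h, map_add, map_sub, map_sub, map_sub, coeff_derivative, coeff_X_mul_derivative]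
  cases k with
  | zero => simp only [coeff_zero_X_mul]; push_cast; ring
  | succ j => rw [coeff_succ_X_mul, map_add, coeff_X_mul_derivative]; push_cast; ring

theorem coeff_mul_sum_range_of_X_pow_dvd {T : ℕ → R⟦X⟧} (hT : ∀ n, X ^ n ∣ T n)
    (f : R⟦X⟧) {k K : ℕ} (hk : k < K) :
    coeff k (f * ∑ n ∈ Finset.range K, T n) =
      coeff k (f * ∑ n ∈ Finset.range (k + 1), T n) := by
  simp only [Finset.mul_sum, map_sum]
  refine (Finset.sum_subset (Finset.range_subset_range.mpr hk) fun n _ hn => ?_).symm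
  exact X_pow_dvd_iff.mp (dvd_mul_of_dvd_right (hT n) f) k (by simpa using hn)

end

theorem inv_factorial_succ_mul {K : Type*} [Field K] [CharZero K] (m : ℕ) :
    ((m + 1).factorial : K)⁻¹ * (m + 1) = (m.factorial : K)⁻¹ := by
  rw [Nat.factorial_succ, Nat.cast_mul, mul_inv, mul_comm, ← mul_assoc]
  push_cast
  rw [mul_inv_cancel₀ (Nat.cast_add_one_ne_zero m), one_mul]

open scoped Polynomial

local notation "D" => d⁄dX ℚ[X]

noncomputable def Lsq : ℚ[X]⟦X⟧ := X * Sser ^ 2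

noncomputable def coshCoeff (n : ℕ) : ℚ[X] :=
  Polynomial.C ((2 * n).factorial : ℚ)⁻¹ * Polynomial.X ^ n

noncomputable def sinhCoeff (n : ℕ) : ℚ[X] :=
  Polynomial.C ((2 * n + 1).factorial : ℚ)⁻¹ * Polynomial.X ^ n

theorem coshTerm_eq (n : ℕ) : coshTerm n = C (coshCoeff n) * Lsq ^ n := rfl

noncomputable def sinhTerm (n : ℕ) : ℚ[X]⟦X⟧ := C (sinhCoeff n) * Lsq ^ n

noncomputable def coshPartial (K : ℕ) : ℚ[X]⟦X⟧ := ∑ n ∈ Finset.range K, coshTerm n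

/-- `Sser * sinhPartial K` truncates `G = sinh(√x L)/√(xt)`. -/
noncomputable def sinhPartial (K : ℕ) : ℚ[X]⟦X⟧ := ∑ n ∈ Finset.range K, sinhTerm n

theorem coshCoeff_succ_mul (n : ℕ) :
    coshCoeff (n + 1) * (2 * ((n : ℚ[X]) + 1)) = Polynomial.X * sinhCoeff n := by
  have h := inv_factorial_succ_mul (K := ℚ) (2 * n + 1)
  rw [show 2 * n + 1 + 1 = 2 * (n + 1) by ring] at h
  rw [coshCoeff, sinhCoeff, ← h]
  simp only [map_mul, map_add, Polynomial.C_eq_natCast, map_one]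
  push_cast
  ring

theorem sinhCoeff_mul (n : ℕ) : sinhCoeff n * (2 * (n : ℚ[X]) + 1) = coshCoeff n := by
  rw [sinhCoeff, coshCoeff, ← inv_factorial_succ_mul (K := ℚ) (2 * n)]
  simp only [map_mul, map_add, Polynomial.C_eq_natCast, map_one]
  push_cast
  ring

theorem one_sub_X_mul_geomSer : (1 - X) * geomSer = 1 := by
  rw [mul_comm]; exact mk_one_mul_one_sub_eq_one _

theorem Sser_add_two_X_mul_derivative : Sser + 2 * (X * D Sser) = 2 * geomSer := by
  ext1 k
  rw [two_mul, two_mul, map_add, map_add, map_add, coeff_X_mul_derivative]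
  simp only [Sser, geomSer, coeff_mk]
  rw [← Polynomial.C_eq_natCast, ← Polynomial.C_mul, ← Polynomial.C_add, ← Polynomial.C_add,
    ← Polynomial.C_1, ← Polynomial.C_add]
  congr 1
  have : (2 * (k : ℚ) + 1) ≠ 0 := by positivity
  field_simp
  ring

theorem one_sub_X_mul_Sser_add_two_X_mul_derivative :
    (1 - X) * (Sser + 2 * (X * D Sser)) = 2 := by
  rw [Sser_add_two_X_mul_derivative, mul_left_comm, one_sub_X_mul_geomSer, mul_one]

theorem one_sub_X_mul_derivative_Lsq : (1 - X) * D Lsq = 2 * Sser := by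
  have h : D Lsq = Sser * (Sser + 2 * (X * D Sser)) := by
    simp only [Lsq, Derivation.leibniz, derivative_pow, derivative_X, smul_eq_mul]
    push_cast
    ring
  rw [h]
  linear_combination Sser * one_sub_X_mul_Sser_add_two_X_mul_derivative

theorem one_sub_X_mul_derivative_Lsq_pow_succ (n : ℕ) :
    (1 - X) * D (Lsq ^ (n + 1)) = 2 * ((n : ℚ[X]⟦X⟧) + 1) * Sser * Lsq ^ n := by
  rw [derivative_pow, Nat.add_sub_cancel]
  push_cast
  linear_combination ((n + 1) * Lsq ^ n) * one_sub_X_mul_derivative_Lsq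

theorem one_sub_X_mul_X_mul_Sser_mul_derivative_Lsq_pow (n : ℕ) :
    (1 - X) * (X * Sser * D (Lsq ^ n)) = 2 * (n : ℚ[X]⟦X⟧) * Lsq ^ n := by
  cases n with
  | zero => simp
  | succ m =>
    have hL : Lsq = X * Sser ^ 2 := rfl
    push_cast
    linear_combination (X * Sser) * one_sub_X_mul_derivative_Lsq_pow_succ m -
      (2 * (m + 1) * Lsq ^ m) * hL

theorem one_sub_X_mul_derivative_coshTerm_succ (n : ℕ) :
    (1 - X) * D (coshTerm (n + 1)) = C Polynomial.X * (Sser * sinhTerm n) := by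
  have hc := congrArg C (coshCoeff_succ_mul n)
  simp only [map_mul, map_natCast, map_ofNat, map_add, map_one] at hc
  rw [coshTerm_eq, derivative_C_mul, sinhTerm]
  linear_combination C (coshCoeff (n + 1)) * one_sub_X_mul_derivative_Lsq_pow_succ n +
    (Sser * Lsq ^ n) * hc

theorem one_sub_X_mul_Sser_mul_sinhTerm_add_two_X_mul_derivative (n : ℕ) :
    (1 - X) * (Sser * sinhTerm n + 2 * (X * D (Sser * sinhTerm n))) = 2 * coshTerm n := by
  have hc := congrArg C (sinhCoeff_mul n)
  simp only [map_mul, map_natCast, map_ofNat, map_add, map_one] at hc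
  have hD : D (Sser * sinhTerm n) =
      C (sinhCoeff n) * (Lsq ^ n * D Sser + Sser * D (Lsq ^ n)) := by
    simp only [sinhTerm, Derivation.leibniz, derivative_C, smul_eq_mul, mul_zero, add_zero]
    ring
  rw [hD, sinhTerm, coshTerm_eq]
  linear_combination (C (sinhCoeff n) * Lsq ^ n) * one_sub_X_mul_Sser_add_two_X_mul_derivative +
    2 * C (sinhCoeff n) * one_sub_X_mul_X_mul_Sser_mul_derivative_Lsq_pow n + 2 * Lsq ^ n * hc

theorem one_sub_X_mul_derivative_coshPartial_succ (K : ℕ) :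
    (1 - X) * D (coshPartial (K + 1)) = C Polynomial.X * (Sser * sinhPartial K) := by
  have h0 : D (coshTerm 0) = 0 := by simp [coshTerm_eq]
  simp only [coshPartial, sinhPartial, Finset.sum_range_succ', map_add, map_sum, h0, add_zero,
    Finset.mul_sum, one_sub_X_mul_derivative_coshTerm_succ]

theorem one_sub_X_mul_Sser_mul_sinhPartial_add_two_X_mul_derivative (K : ℕ) :
    (1 - X) * (Sser * sinhPartial K + 2 * (X * D (Sser * sinhPartial K))) =
      2 * coshPartial K := by
  simp only [sinhPartial, coshPartial, Finset.mul_sum, map_sum, ← Finset.sum_add_distrib,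
    one_sub_X_mul_Sser_mul_sinhTerm_add_two_X_mul_derivative]

theorem Sser_mul_sinhPartial_add_two_X_mul_derivative (K : ℕ) :
    Sser * sinhPartial K + 2 * (X * D (Sser * sinhPartial K)) =
      2 * (geomSer * coshPartial K) := by
  linear_combination geomSer * one_sub_X_mul_Sser_mul_sinhPartial_add_two_X_mul_derivative K -
    (Sser * sinhPartial K + 2 * (X * D (Sser * sinhPartial K))) * one_sub_X_mul_geomSer

theorem one_sub_X_sq_mul_derivative_sub_geomSer_mul_coshPartial (K : ℕ) :
    (1 - X) ^ 2 * D (geomSer * coshPartial (K + 1)) - (1 - X) * (geomSer * coshPartial (K + 1)) =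
      C Polynomial.X * (Sser * sinhPartial K) := by
  set Φ := geomSer * coshPartial (K + 1)
  have hC : coshPartial (K + 1) = (1 - X) * Φ := by
    rw [← mul_assoc, one_sub_X_mul_geomSer, one_mul]
  have hD : D (coshPartial (K + 1)) = (1 - X) * D Φ - Φ := by
    rw [hC]
    simp only [Derivation.leibniz, map_sub, derivative_X, Derivation.map_one_eq_zero, smul_eq_mul]
    ring
  rw [← one_sub_X_mul_derivative_coshPartial_succ, hD]
  ring

theorem X_pow_dvd_coshTerm (n : ℕ) : X ^ n ∣ coshTerm n :=
  ⟨C (coshCoeff n) * (Sser ^ 2) ^ n, by rw [coshTerm_eq, Lsq, mul_pow]; ring⟩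

theorem coeff_geomSer_mul_coshPartial {k K : ℕ} (hk : k < K) :
    coeff k (geomSer * coshPartial K) = Qpoly k :=
  coeff_mul_sum_range_of_X_pow_dvd X_pow_dvd_coshTerm geomSer hk

noncomputable def Gpoly (k : ℕ) : ℚ[X] := coeff k (Sser * sinhPartial (k + 1))

theorem two_mul_add_one_mul_Gpoly (k : ℕ) : (2 * (k : ℚ[X]) + 1) * Gpoly k = 2 * Qpoly k := by
  have h := congrArg (coeff k) (Sser_mul_sinhPartial_add_two_X_mul_derivative (k + 1))
  rwa [coeff_add_two_mul_X_mul_derivative, ← map_ofNat C 2, coeff_C_mul,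
    coeff_geomSer_mul_coshPartial (Nat.lt_succ_self k)] at h

theorem Qpoly_three_term (k : ℕ) :
    ((k : ℚ[X]) + 1) * Qpoly (k + 1) - (2 * (k : ℚ[X]) + 1) * Qpoly k +
        (k : ℚ[X]) * Qpoly (k - 1) =
      Polynomial.X * Gpoly k := by
  have h := congrArg (coeff k) (one_sub_X_sq_mul_derivative_sub_geomSer_mul_coshPartial (k + 1))
  rwa [coeff_one_sub_X_sq_mul_derivative_sub, coeff_C_mul,
    coeff_geomSer_mul_coshPartial (by omega : k + 1 < k + 2),
    coeff_geomSer_mul_coshPartial (by omega : k < k + 2),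
    coeff_geomSer_mul_coshPartial (by omega : k - 1 < k + 2)] at h

/-- Three-term recursion for the polynomials `Q_k`, with the convention
`Q_{-1} = 0` (the `k = 0` case has vanishing coefficient in front of `Q_{k-1}`). -/
theorem stmt5 (k : ℕ) :
    (Polynomial.C (2 * (k : ℚ) + 1) + Polynomial.C (2 / (2 * (k : ℚ) + 1)) * Polynomial.X) *
        Qpoly k =
      ((k : ℚ) + 1) • Qpoly (k + 1) + (k : ℚ) • Qpoly (k - 1) := by
  have hinv : (2 * (k : ℚ[X]) + 1) * Polynomial.C (2 * (k : ℚ) + 1)⁻¹ = 1 := by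
    rw [← Polynomial.C_eq_natCast, ← map_ofNat Polynomial.C 2, ← Polynomial.C_mul,
      ← Polynomial.C_1, ← Polynomial.C_add, ← Polynomial.C_mul,
      mul_inv_cancel₀ (by positivity)]
  rw [Polynomial.smul_eq_C_mul, Polynomial.smul_eq_C_mul, div_eq_mul_inv]
  simp only [map_add, map_mul, map_one, map_ofNat, Polynomial.C_eq_natCast]
  linear_combination -Qpoly_three_term k -
    Polynomial.X * Polynomial.C (2 * (k : ℚ) + 1)⁻¹ * two_mul_add_one_mul_Gpoly k +
    Polynomial.X * Gpoly k * hinv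
end

section
/- Fix a real number x. For each k ≥ 1, ∫_0^∞ e^{ixρ/π} tanh^{2k+1}(ρ/2) / (2 sinh²(ρ/2)) dρ has absolute value at most 2π/((2k-1)|x|) for x ≠ 0; in particular, also |∫_0^∞ tanh^{2k+1}(ρ/2)/(2 sinh²(ρ/2)) dρ| = 1/(2k). -/
/-!
Write `t = tanh (ρ / 2)`, so that `dt/dρ = (1 - t²) / 2`. For `k ≥ 1` the integrand is
`f = t ^ (2k-1) * (1 - t²) / 2 = t ^ (2k-1) dt/dρ`, hence its integral is `∫₀¹ t ^ (2k-1) dt = 1/(2k)`.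
Since `f` vanishes at `0` and at `∞`, one integration by parts against `e^{icρ}`, `c = x/π`, gives
`|∫ e^{icρ} f| ≤ |c|⁻¹ ∫ |f'|`. Splitting
`f' = ((2k-1) t ^ (2k-2) (1 - t²) - 2 t ^ (2k)) / 2 * dt/dρ` into its positive and negative parts
and substituting `t` once more gives `∫ |f'| ≤ 2/(2k+1)`.
-/

open MeasureTheory Filter Set Topology

namespace Real

theorem hasDerivAt_tanh (x : ℝ) : HasDerivAt tanh (1 - tanh x ^ 2) x := by
  rw [show tanh = sinh / cosh from funext tanh_eq_sinh_div_cosh]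
  refine ((hasDerivAt_sinh x).div (hasDerivAt_cosh x) (cosh_pos x).ne').congr_deriv ?_
  have hc := (cosh_pos x).ne'
  simp only [Pi.div_apply]
  field_simp

@[fun_prop]
theorem continuous_tanh : Continuous tanh :=
  continuous_iff_continuousAt.2 fun x => (hasDerivAt_tanh x).continuousAt

theorem tendsto_tanh_atTop : Tendsto tanh atTop (𝓝 1) := by
  have hexp : Tendsto (fun x => exp (-(2 * x))) atTop (𝓝 0) :=
    tendsto_exp_neg_atTop_nhds_zero.comp (tendsto_id.const_mul_atTop two_pos)
  have h := (hexp.const_sub 1).div (hexp.const_add 1) (by norm_num)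
  rw [sub_zero, add_zero, div_one] at h
  refine h.congr fun x => ?_
  rw [Pi.div_apply, tanh_eq, exp_neg, exp_neg, show 2 * x = x + x by ring, exp_add]
  field_simp

theorem tanh_nonneg {x : ℝ} (hx : 0 ≤ x) : 0 ≤ tanh x := by
  rw [tanh_eq_sinh_div_cosh]
  exact div_nonneg (sinh_nonneg_iff.2 hx) (cosh_pos x).le

/-- Both sides vanish at `x = 0`, where the left one is `0 / 0`. -/
theorem tanh_pow_add_three_div_two_mul_sinh_sq (n : ℕ) (x : ℝ) :
    tanh x ^ (n + 3) / (2 * sinh x ^ 2) = tanh x ^ (n + 1) * ((1 - tanh x ^ 2) / 2) := by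
  rw [tanh_eq_sinh_div_cosh]
  rcases eq_or_ne (sinh x) 0 with hs | hs
  · simp [hs]
  have hc := (cosh_pos x).ne'
  have h : 1 - (sinh x / cosh x) ^ 2 = 1 / cosh x ^ 2 := by
    field_simp
    linear_combination cosh_sq_sub_sinh_sq x
  rw [h, pow_add _ (n + 1) 2]
  field_simp

end Real

open Real

theorem hasDerivAt_tanh_half (ρ : ℝ) :
    HasDerivAt (fun ρ => tanh (ρ / 2)) ((1 - tanh (ρ / 2) ^ 2) / 2) ρ := by
  have := (hasDerivAt_tanh (ρ / 2)).comp ρ ((hasDerivAt_id' ρ).div_const 2)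
  rwa [mul_one_div] at this

theorem integral_Ioi_comp_tanh_half {G g : ℝ → ℝ} (hG : ∀ u, HasDerivAt G (g u) u)
    (hg : ∀ u ∈ Ico (0 : ℝ) 1, 0 ≤ g u) :
    IntegrableOn (fun ρ => g (tanh (ρ / 2)) * ((1 - tanh (ρ / 2) ^ 2) / 2)) (Ioi 0) ∧
      ∫ ρ in Ioi 0, g (tanh (ρ / 2)) * ((1 - tanh (ρ / 2) ^ 2) / 2) = G 1 - G 0 := by
  have hderiv : ∀ ρ ∈ Ici (0 : ℝ), HasDerivAt (fun ρ => G (tanh (ρ / 2)))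
      (g (tanh (ρ / 2)) * ((1 - tanh (ρ / 2) ^ 2) / 2)) ρ :=
    fun ρ _ => (hG _).comp ρ (hasDerivAt_tanh_half ρ)
  have hnonneg : ∀ ρ ∈ Ioi (0 : ℝ), 0 ≤ g (tanh (ρ / 2)) * ((1 - tanh (ρ / 2) ^ 2) / 2) :=
    fun ρ hρ => mul_nonneg
      (hg _ ⟨tanh_nonneg (by linarith [hρ.out]), tanh_lt_one _⟩)
      (by linarith [tanh_sq_lt_one (ρ / 2)])
  have hlim : Tendsto (fun ρ => G (tanh (ρ / 2))) atTop (𝓝 (G 1)) :=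
    (hG 1).continuousAt.tendsto.comp
      (tendsto_tanh_atTop.comp (tendsto_id.atTop_div_const two_pos))
  refine ⟨integrableOn_Ioi_deriv_of_nonneg' hderiv hnonneg hlim, ?_⟩
  rw [integral_Ioi_of_hasDerivAt_of_nonneg' hderiv hnonneg hlim]
  simp

theorem norm_integral_Ioi_exp_mul_I_le {f f' : ℝ → ℂ} {a c : ℝ} (hc : c ≠ 0)
    (hf : ∀ x ∈ Ici a, HasDerivAt f (f' x) x) (hfa : f a = 0)
    (hf_top : Tendsto f atTop (𝓝 0)) (hfi : IntegrableOn f (Ioi a))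
    (hf'i : IntegrableOn f' (Ioi a)) :
    ‖∫ x in Ioi a, Complex.exp (c * x * Complex.I) * f x‖ ≤ (∫ x in Ioi a, ‖f' x‖) / |c| := by
  set e : ℝ → ℂ := fun x => Complex.exp (c * x * Complex.I)
  have he_norm : ∀ x, ‖e x‖ = 1 := fun x => by simp [e, ← Complex.ofReal_mul]
  have he : ∀ x, HasDerivAt e (c * Complex.I * e x) x := fun x => by
    have := ((Complex.ofRealCLM.hasDerivAt (x := x)).const_mul (c : ℂ)).mul_const Complex.I
    simpa [e, mul_comm] using this.cexp
  have hc' : (c : ℂ) ≠ 0 := by exact_mod_cast hc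
  have hcI : (c * Complex.I : ℂ) ≠ 0 := mul_ne_zero hc' Complex.I_ne_zero
  have hbdd : ∀ {g : ℝ → ℂ}, IntegrableOn g (Ioi a) → IntegrableOn (fun x => e x * g x) (Ioi a) :=
    fun hg => hg.bdd_mul (by fun_prop) (Eventually.of_forall fun x => (he_norm x).le)
  have hH : ∀ x ∈ Ici a, HasDerivAt (fun x => e x * f x / (c * Complex.I))
      (e x * f x + e x * f' x / (c * Complex.I)) x := fun x hx => by
    refine (((he x).mul (hf x hx)).div_const (c * Complex.I)).congr_deriv ?_
    field_simp
  have hH_top : Tendsto (fun x => e x * f x / (c * Complex.I)) atTop (𝓝 0) := by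
    rw [tendsto_zero_iff_norm_tendsto_zero]
    simpa [he_norm] using
      (tendsto_zero_iff_norm_tendsto_zero.1 hf_top).div_const ‖(c * Complex.I : ℂ)‖
  have hFTC := integral_Ioi_of_hasDerivAt_of_tendsto' hH
    ((hbdd hfi).add ((hbdd hf'i).div_const _)) hH_top
  rw [integral_add (hbdd hfi) ((hbdd hf'i).div_const _), integral_div, hfa, mul_zero, zero_div,
    sub_zero] at hFTC
  rw [eq_neg_of_add_eq_zero_left hFTC, norm_neg, norm_div, norm_mul, Complex.norm_I, mul_one,
    Complex.norm_real, Real.norm_eq_abs]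
  gcongr
  refine (norm_integral_le_integral_norm _).trans_eq (integral_congr_ae ?_)
  exact Eventually.of_forall fun x => by simp [he_norm]

theorem abs_deriv_pow_mul_one_sub_sq_le (n : ℕ) {u : ℝ} (hu₀ : 0 ≤ u) (hu₁ : u ≤ 1) :
    |(((n : ℝ) + 1) * u ^ n - (n + 3) * u ^ (n + 2)) / 2| ≤
      (((n : ℝ) + 1) * u ^ n * (1 - u ^ 2) + 2 * u ^ (n + 2)) / 2 := by
  have hpos : 0 ≤ ((n : ℝ) + 1) * u ^ n * (1 - u ^ 2) := by
    have : 0 ≤ 1 - u ^ 2 := by nlinarith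
    positivity
  have hneg : 0 ≤ u ^ (n + 2) := by positivity
  rw [show (((n : ℝ) + 1) * u ^ n - (n + 3) * u ^ (n + 2)) / 2
      = (((n : ℝ) + 1) * u ^ n * (1 - u ^ 2) - 2 * u ^ (n + 2)) / 2 by ring, abs_le]
  constructor <;> linarith

theorem integral_tanh_half_pow_mul (n : ℕ) :
    IntegrableOn (fun ρ : ℝ => tanh (ρ / 2) ^ (n + 1) * ((1 - tanh (ρ / 2) ^ 2) / 2)) (Ioi 0) ∧
      ∫ ρ in Ioi (0 : ℝ), tanh (ρ / 2) ^ (n + 1) * ((1 - tanh (ρ / 2) ^ 2) / 2) =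
        1 / ((n : ℝ) + 2) := by
  have hG : ∀ u : ℝ, HasDerivAt (fun u : ℝ => u ^ (n + 2) / (n + 2)) (u ^ (n + 1)) u := fun u => by
    refine ((hasDerivAt_pow (n + 2) u).div_const ((n : ℝ) + 2)).congr_deriv ?_
    field_simp
    push_cast
    ring
  obtain ⟨hint, heq⟩ := integral_Ioi_comp_tanh_half hG fun u hu => pow_nonneg hu.1 _
  exact ⟨hint, by rw [heq]; simp⟩

theorem tendsto_tanh_half_pow_mul_atTop (n : ℕ) :
    Tendsto (fun ρ : ℝ => tanh (ρ / 2) ^ (n + 1) * ((1 - tanh (ρ / 2) ^ 2) / 2)) atTop (𝓝 0) := by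
  have ht := tendsto_tanh_atTop.comp (tendsto_id.atTop_div_const (two_pos : (0 : ℝ) < 2))
  simpa using (ht.pow (n + 1)).mul (((ht.pow 2).const_sub 1).div_const 2)

theorem hasDerivAt_tanh_half_pow_mul (n : ℕ) (ρ : ℝ) :
    HasDerivAt (fun ρ => tanh (ρ / 2) ^ (n + 1) * ((1 - tanh (ρ / 2) ^ 2) / 2))
      ((((n : ℝ) + 1) * tanh (ρ / 2) ^ n - (n + 3) * tanh (ρ / 2) ^ (n + 2)) / 2 *
        ((1 - tanh (ρ / 2) ^ 2) / 2)) ρ := by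
  have hP : ∀ u : ℝ, HasDerivAt (fun u : ℝ => u ^ (n + 1) * ((1 - u ^ 2) / 2))
      ((((n : ℝ) + 1) * u ^ n - (n + 3) * u ^ (n + 2)) / 2) u := fun u => by
    refine ((hasDerivAt_pow (n + 1) u).mul
      (((hasDerivAt_pow 2 u).const_sub 1).div_const 2)).congr_deriv ?_
    push_cast
    ring
  exact (hP _).comp ρ (hasDerivAt_tanh_half ρ)

theorem integral_abs_deriv_tanh_half_pow_mul_le (n : ℕ) :
    IntegrableOn (fun ρ : ℝ =>
        (((n : ℝ) + 1) * tanh (ρ / 2) ^ n - (n + 3) * tanh (ρ / 2) ^ (n + 2)) / 2 *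
          ((1 - tanh (ρ / 2) ^ 2) / 2)) (Ioi 0) ∧
      ∫ ρ in Ioi (0 : ℝ), |(((n : ℝ) + 1) * tanh (ρ / 2) ^ n - (n + 3) * tanh (ρ / 2) ^ (n + 2)) / 2 *
        ((1 - tanh (ρ / 2) ^ 2) / 2)| ≤ 2 / ((n : ℝ) + 3) := by
  have hR : ∀ u : ℝ, HasDerivAt (fun u : ℝ => (u ^ (n + 1) - (n - 1) / (n + 3) * u ^ (n + 3)) / 2)
      ((((n : ℝ) + 1) * u ^ n * (1 - u ^ 2) + 2 * u ^ (n + 2)) / 2) u := fun u => by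
    refine (((hasDerivAt_pow (n + 1) u).sub
      ((hasDerivAt_pow (n + 3) u).const_mul _)).div_const 2).congr_deriv ?_
    field_simp
    push_cast
    ring
  obtain ⟨hint, heq⟩ := integral_Ioi_comp_tanh_half hR fun u hu =>
    (abs_nonneg _).trans (abs_deriv_pow_mul_one_sub_sq_le n hu.1 hu.2.le)
  have hbound : ∀ ρ ∈ Ioi (0 : ℝ),
      ‖(((n : ℝ) + 1) * tanh (ρ / 2) ^ n - (n + 3) * tanh (ρ / 2) ^ (n + 2)) / 2 *
        ((1 - tanh (ρ / 2) ^ 2) / 2)‖ ≤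
      (((n : ℝ) + 1) * tanh (ρ / 2) ^ n * (1 - tanh (ρ / 2) ^ 2) + 2 * tanh (ρ / 2) ^ (n + 2)) / 2 *
        ((1 - tanh (ρ / 2) ^ 2) / 2) := by
    intro ρ hρ
    have ht : 0 ≤ (1 - tanh (ρ / 2) ^ 2) / 2 := by linarith [tanh_sq_lt_one (ρ / 2)]
    rw [Real.norm_eq_abs, abs_mul, abs_of_nonneg ht]
    exact mul_le_mul_of_nonneg_right (abs_deriv_pow_mul_one_sub_sq_le n
      (tanh_nonneg (by linarith [hρ.out])) (tanh_lt_one _).le) ht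
  have hint' := hint.mono' (by fun_prop)
    ((ae_restrict_iff' measurableSet_Ioi).2 (Eventually.of_forall hbound))
  refine ⟨hint', (setIntegral_mono_on hint'.abs hint measurableSet_Ioi hbound).trans_eq ?_⟩
  rw [heq]
  field_simp
  ring

theorem norm_integral_exp_mul_tanh_half_pow_mul_le (n : ℕ) {c : ℝ} (hc : c ≠ 0) :
    ‖∫ ρ in Ioi (0 : ℝ), Complex.exp (c * ρ * Complex.I) *
        ((tanh (ρ / 2) ^ (n + 1) * ((1 - tanh (ρ / 2) ^ 2) / 2) : ℝ) : ℂ)‖ ≤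
      2 / (((n : ℝ) + 3) * |c|) := by
  obtain ⟨hfi, -⟩ := integral_tanh_half_pow_mul n
  obtain ⟨hf'i, hf'_int⟩ := integral_abs_deriv_tanh_half_pow_mul_le n
  have htop := (Complex.continuous_ofReal.tendsto 0).comp (tendsto_tanh_half_pow_mul_atTop n)
  rw [Complex.ofReal_zero] at htop
  refine (norm_integral_Ioi_exp_mul_I_le hc
    (fun ρ _ => (hasDerivAt_tanh_half_pow_mul n ρ).ofReal_comp) (by simp) htop
    hfi.ofReal hf'i.ofReal).trans ?_
  simp only [Complex.norm_real, Real.norm_eq_abs]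
  rw [← div_div]
  gcongr

theorem stmt17 (x : ℝ) (k : ℕ) (hk : 1 ≤ k) :
    (x ≠ 0 →
      ‖∫ ρ in Set.Ioi (0 : ℝ),
          Complex.exp (Complex.I * x * ρ / Real.pi) *
            (Real.tanh (ρ / 2) ^ (2 * k + 1) / (2 * Real.sinh (ρ / 2) ^ 2))‖ ≤
        2 * Real.pi / ((2 * (k : ℝ) - 1) * |x|)) ∧
    |∫ ρ in Set.Ioi (0 : ℝ),
        Real.tanh (ρ / 2) ^ (2 * k + 1) / (2 * Real.sinh (ρ / 2) ^ 2)| =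
      1 / (2 * (k : ℝ)) := by
  obtain ⟨m, rfl⟩ : ∃ m, k = m + 1 := ⟨k - 1, by omega⟩
  have hf : ∀ ρ : ℝ, tanh (ρ / 2) ^ (2 * (m + 1) + 1) / (2 * sinh (ρ / 2) ^ 2)
      = tanh (ρ / 2) ^ (2 * m + 1) * ((1 - tanh (ρ / 2) ^ 2) / 2) :=
    fun ρ => tanh_pow_add_three_div_two_mul_sinh_sq (2 * m) (ρ / 2)
  refine ⟨fun hx => ?_, ?_⟩
  · have hm : (0 : ℝ) ≤ m := m.cast_nonneg
    calc _ = ‖∫ ρ in Ioi (0 : ℝ), Complex.exp ((x / π : ℝ) * ρ * Complex.I) *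
            ((tanh (ρ / 2) ^ (2 * m + 1) * ((1 - tanh (ρ / 2) ^ 2) / 2) : ℝ) : ℂ)‖ := by
          refine congrArg _ (integral_congr_ae (Eventually.of_forall fun ρ => ?_))
          simp only [← hf]
          push_cast
          ring_nf
      _ ≤ 2 / (((2 * m : ℕ) + 3 : ℝ) * |x / π|) :=
          norm_integral_exp_mul_tanh_half_pow_mul_le (2 * m) (div_ne_zero hx pi_ne_zero)
      _ ≤ 2 * π / ((2 * ((m + 1 : ℕ) : ℝ) - 1) * |x|) := by
          rw [abs_div, abs_of_pos pi_pos, ← mul_div_assoc, div_div_eq_mul_div, mul_comm 2 π]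
          push_cast
          gcongr
          · exact mul_pos (by linarith) (abs_pos.2 hx)
          · linarith
  · simp_rw [hf]
    rw [(integral_tanh_half_pow_mul (2 * m)).2]
    push_cast
    rw [abs_of_pos (by positivity)]
    ring
end
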